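/- arXiv:1910.13248 — 2 statements merged into one kernel-verified Lean document; each statement's English description precedes it below -/
import Mathlib

section
/- For a prime q, an integer y, and all n ≥ 1, the geometric polynomials satisfy w_{q+n-1}(y) ≡ w_n(y) (mod q), where w_n(y) = Σ_{k=0}^{n} S(n,k)·k!·y^k. -/
open Finset

/-- Stirling numbers of the second kind. -/
def stirling2 : ℕ → ℕ → ℕ
  | 0, 0 => 1
  | 0, _+1 => 0
  | _+1, 0 => 0
  | n+1, k+1 => stirling2 n k + (k+1) * stirling2 n (k+1)

/-- Unsigned Stirling numbers of the first kind. -/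
def stirling1 : ℕ → ℕ → ℕ
  | 0, 0 => 1
  | 0, _+1 => 0
  | _+1, 0 => 0
  | n+1, k+1 => stirling1 n k + n * stirling1 n (k+1)

/-- `rstirling2 r n k` is the r-Stirling number of the second kind S_r(n+r, k+r). -/
def rstirling2 (r : ℕ) : ℕ → ℕ → ℕ
  | 0, 0 => 1
  | 0, _+1 => 0
  | n+1, 0 => r * rstirling2 r n 0
  | n+1, k+1 => rstirling2 r n k + (k+1+r) * rstirling2 r n (k+1)

/-- `rstirling1 r n k` is the unsigned r-Stirling number of the first kind c_r(n+r, k+r). -/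
def rstirling1 (r : ℕ) : ℕ → ℕ → ℕ
  | 0, 0 => 1
  | 0, _+1 => 0
  | n+1, 0 => (n+r) * rstirling1 r n 0
  | n+1, k+1 => rstirling1 r n k + (n+r) * rstirling1 r n (k+1)

/-- Rising factorial (Pochhammer symbol) (r)_k = r(r+1)⋯(r+k-1). -/
def risingFactorial (r k : ℕ) : ℕ := ∏ i ∈ Finset.range k, (r + i)

/-- Higher order geometric polynomial w_n^{(r)}(y) = Σ_{k=0}^n S(n,k) (r)_k y^k.
For r = 1 this is the geometric (Fubini) polynomial w_n(y). -/
def geomPoly (r n : ℕ) {R : Type*} [CommRing R] (y : R) : R :=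
  ∑ k ∈ Finset.range (n+1), ((stirling2 n k * risingFactorial r k : ℕ) : R) * y ^ k

lemma stirling2_eq_zero : ∀ {n k : ℕ}, n < k → stirling2 n k = 0 := by
  intro n
  induction n with
  | zero => intro k h; cases k with
    | zero => omega
    | succ k => rfl
  | succ n ih =>
    intro k h
    cases k with
    | zero => omega
    | succ k =>
      rw [stirling2, ih (by omega), ih (by omega), mul_zero, add_zero]

lemma risingFactorial_one (k : ℕ) : risingFactorial 1 k = k.factorial := by
  induction k with
  | zero => rfl
  | succ k ih =>
    rw [risingFactorial, Finset.prod_range_succ, ← risingFactorial, ih, Nat.factorial_succ]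
    ring

/-- The surjection formula for Stirling numbers of the second kind. -/
lemma stirling2_key (n : ℕ) : ∀ k, ((stirling2 n k * Nat.factorial k : ℕ) : ℤ) =
    ∑ j ∈ Finset.range (k+1), (-1:ℤ)^(k+j) * (k.choose j) * (j : ℤ)^n := by
  induction n with
  | zero =>
    intro k
    cases k with
    | zero => simp [stirling2]
    | succ k =>
      have h := Int.alternating_sum_range_choose (n := k+1)
      rw [if_neg (Nat.succ_ne_zero k)] at h
      have h2 : ∑ j ∈ Finset.range (k+1+1), (-1:ℤ)^(k+1+j) * ((k+1).choose j) * (j:ℤ)^0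
          = (-1:ℤ)^(k+1) * ∑ j ∈ Finset.range (k+1+1), (-1:ℤ)^j * ((k+1).choose j) := by
        rw [Finset.mul_sum]
        refine Finset.sum_congr rfl fun j _ => ?_
        rw [pow_zero, pow_add]; ring
      rw [h2, h, mul_zero]
      show ((stirling2 0 (k+1) * _ : ℕ) : ℤ) = 0
      simp [stirling2]
  | succ n ih =>
    intro k
    cases k with
    | zero =>
      show ((stirling2 (n+1) 0 * _ : ℕ) : ℤ) = _
      simp [stirling2]
    | succ k =>
      have hA := ih k
      have hB := ih (k+1)
      have hU : (∑ j ∈ Finset.range (k+1), (-1:ℤ)^(k+j) * (k.choose j) * (j:ℤ)^n)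
          + ∑ j ∈ Finset.range (k+1+1), (-1:ℤ)^(k+1+j) * ((k+1).choose j) * (j:ℤ)^n
          = ∑ i ∈ Finset.range (k+1), (-1:ℤ)^(k+i) * (k.choose i) * ((i:ℤ)+1)^n := by
        rw [Finset.sum_range_succ' (fun j => (-1:ℤ)^(k+j) * (k.choose j) * (j:ℤ)^n) k,
            Finset.sum_range_succ' (fun j => (-1:ℤ)^(k+1+j) * ((k+1).choose j) * (j:ℤ)^n) (k+1)]
        have hext : (∑ i ∈ Finset.range k, (-1:ℤ)^(k+(i+1)) * (k.choose (i+1)) * ((i+1:ℕ):ℤ)^n)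
            = ∑ i ∈ Finset.range (k+1), (-1:ℤ)^(k+(i+1)) * (k.choose (i+1)) * ((i+1:ℕ):ℤ)^n := by
          rw [Finset.sum_range_succ, Nat.choose_succ_self]
          push_cast
          ring
        rw [hext]
        have hz : (-1:ℤ)^(k+0) * (k.choose 0) * ((0:ℕ):ℤ)^n
            + (-1:ℤ)^(k+1+0) * ((k+1).choose 0) * ((0:ℕ):ℤ)^n = 0 := by
          simp only [Nat.choose_zero_right, Nat.cast_one, Nat.cast_zero]
          ring
        have hsum : (∑ i ∈ Finset.range (k+1), (-1:ℤ)^(k+(i+1)) * (k.choose (i+1)) * ((i+1:ℕ):ℤ)^n)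
            + (∑ i ∈ Finset.range (k+1), (-1:ℤ)^(k+1+(i+1)) * ((k+1).choose (i+1)) * ((i+1:ℕ):ℤ)^n)
            = ∑ i ∈ Finset.range (k+1), (-1:ℤ)^(k+i) * (k.choose i) * ((i:ℤ)+1)^n := by
          rw [← Finset.sum_add_distrib]
          refine Finset.sum_congr rfl fun i _ => ?_
          rw [Nat.choose_succ_succ]
          push_cast
          ring
        linear_combination hsum + hz
      have hR : (∑ j ∈ Finset.range (k+1+1), (-1:ℤ)^(k+1+j) * ((k+1).choose j) * (j : ℤ)^(n+1))
          = (k+1) * ∑ i ∈ Finset.range (k+1), (-1:ℤ)^(k+i) * (k.choose i) * ((i:ℤ)+1)^n := by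
        rw [Finset.sum_range_succ' (fun j => (-1:ℤ)^(k+1+j) * ((k+1).choose j) * (j:ℤ)^(n+1)) (k+1),
            Finset.mul_sum]
        have : ∀ i ∈ Finset.range (k+1),
            (-1:ℤ)^(k+1+(i+1)) * ((k+1).choose (i+1)) * ((i+1:ℕ):ℤ)^(n+1)
            = (k+1) * ((-1:ℤ)^(k+i) * (k.choose i) * ((i:ℤ)+1)^n) := by
          intro i _
          have hc := congrArg (Nat.cast (R := ℤ)) (Nat.add_one_mul_choose_eq k i)
          push_cast at hc
          push_cast
          linear_combination (-(-1:ℤ)^(k+i) * ((i:ℤ)+1)^n) * hc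
        rw [Finset.sum_congr rfl this]
        push_cast
        ring
      rw [hR, ← hU, ← hA, ← hB]
      have hs : stirling2 (n+1) (k+1) = stirling2 n k + (k+1) * stirling2 n (k+1) := rfl
      rw [hs]
      push_cast [Nat.factorial_succ]
      ring

theorem stmt_1 (q : ℕ) (hq : q.Prime) (y : ℤ) (n : ℕ) (hn : 1 ≤ n) :
    geomPoly 1 (q + n - 1) y ≡ geomPoly 1 n y [ZMOD (q : ℤ)] := by
  haveI := Fact.mk hq
  have hq1 : 1 ≤ q := hq.one_lt.le
  rw [← ZMod.intCast_eq_intCast_iff]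
  set x : ZMod q := (y : ZMod q) with hx
  -- cast geomPoly into ZMod q
  have cast1 : ∀ m : ℕ, ((geomPoly 1 m y : ℤ) : ZMod q)
      = ∑ k ∈ Finset.range (m+1), ((stirling2 m k * Nat.factorial k : ℕ) : ZMod q) * x ^ k := by
    intro m
    simp only [geomPoly, risingFactorial_one]
    push_cast
    rfl
  -- the key formula in ZMod q
  have keyZ : ∀ m k : ℕ, ((stirling2 m k * Nat.factorial k : ℕ) : ZMod q)
      = ∑ j ∈ Finset.range (k+1), (-1:ZMod q)^(k+j) * (k.choose j) * (j : ZMod q)^m := by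
    intro m k
    have := congrArg (Int.cast : ℤ → ZMod q) (stirling2_key m k)
    push_cast at this ⊢
    exact this
  -- Fermat's little theorem step
  have fermat : ∀ z : ZMod q, z ^ (q + n - 1) = z ^ n := by
    intro z
    have h1 : q + n - 1 = (n - 1) + q := by omega
    rw [h1, pow_add, ZMod.pow_card, ← pow_succ]
    congr 1
    omega
  -- extend the sum for geomPoly 1 n to range (q + n)
  have hext : (∑ k ∈ Finset.range (n+1), ((stirling2 n k * Nat.factorial k : ℕ) : ZMod q) * x ^ k)
      = ∑ k ∈ Finset.range (q+n), ((stirling2 n k * Nat.factorial k : ℕ) : ZMod q) * x ^ k := by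
    refine Finset.sum_subset (Finset.range_subset_range.mpr (by omega)) ?_
    intro k _ hk
    rw [Finset.mem_range, not_lt] at hk
    rw [stirling2_eq_zero (by omega), zero_mul, Nat.cast_zero, zero_mul]
  have hN : q + n - 1 + 1 = q + n := by omega
  rw [cast1, cast1, hext, hN]
  refine Finset.sum_congr rfl fun k _ => ?_
  rw [keyZ, keyZ]
  congr 1
  refine Finset.sum_congr rfl fun j _ => ?_
  rw [fermat]
end

section
/- For all nonnegative integers n and positive integers r, the higher order geometric polynomial satisfies w_n^{(r)}(y) = Σ_{k=0}^{n} S_r(n+r, k+r) · (r)_k · (-1)^{n+k} · (y+1)^k as an identity of polynomials in y, where S_r denotes the r-Stirling numbers of the second kind. -/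
open Finset

lemma rf_succ (r k : ℕ) : risingFactorial r (k+1) = risingFactorial r k * (r+k) := by
  simp [risingFactorial, Finset.prod_range_succ]

lemma rstirling2_eq_zero (r : ℕ) : ∀ n j, n < j → rstirling2 r n j = 0
  | 0, j+1, _ => rfl
  | n+1, j+1, h => by
    have h1 : n < j := Nat.lt_of_succ_lt_succ h
    simp [rstirling2, rstirling2_eq_zero r n j h1,
      rstirling2_eq_zero r n (j+1) (Nat.lt_succ_of_lt h1)]

lemma choose_id (r j k : ℕ) :
    ((r:ℤ)+j) * (j.choose k : ℤ)
      = ((r:ℤ)+k) * (j.choose k : ℤ) + ((k:ℤ)+1) * (j.choose (k+1) : ℤ) := by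
  rcases le_or_gt k j with h | h
  · have h1 := Nat.choose_succ_right_eq j k
    have h2 : (j.choose (k+1) : ℤ) * ((k:ℤ)+1) = (j.choose k : ℤ) * ((j:ℤ) - k) := by
      have := congrArg (Nat.cast (R := ℤ)) h1
      push_cast [Nat.cast_sub h] at this
      linarith [this]
    linear_combination -h2
  · simp [Nat.choose_eq_zero_of_lt h, Nat.choose_eq_zero_of_lt (Nat.lt_succ_of_lt h)]

lemma key (r : ℕ) : ∀ n k, ((stirling2 n k : ℤ) * (risingFactorial r k : ℤ)) =
    ∑ j ∈ range (n+1),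
      (-1:ℤ)^(n+j) * (j.choose k : ℤ) * (rstirling2 r n j : ℤ) * (risingFactorial r j : ℤ) := by
  intro n
  induction n with
  | zero =>
    intro k
    cases k <;> simp [stirling2, risingFactorial, rstirling2]
  | succ n ih =>
    have step1 : ∀ k, ∑ j ∈ range (n+2),
          (-1:ℤ)^(n+1+j) * (j.choose k : ℤ) * (rstirling2 r (n+1) j : ℤ) * (risingFactorial r j : ℤ)
        = ∑ j ∈ range (n+1),
          (-1:ℤ)^(n+j) * ((r:ℤ)+j) * (((j+1).choose k : ℤ) - (j.choose k : ℤ)) *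
            ((rstirling2 r n j : ℤ) * (risingFactorial r j : ℤ)) := by
      intro k
      set g : ℕ → ℤ := fun j =>
        (-1:ℤ)^(n+j+1) * (j.choose k : ℤ) * ((r:ℤ)+j) *
          ((rstirling2 r n j : ℤ) * (risingFactorial r j : ℤ)) with hgdef
      rw [Finset.sum_range_succ']
      have hfs : ∀ j ∈ range (n+1),
          (-1:ℤ)^(n+1+(j+1)) * (((j+1).choose k : ℤ)) * (rstirling2 r (n+1) (j+1) : ℤ) *
              (risingFactorial r (j+1) : ℤ)
            = (-1:ℤ)^(n+j) * (((j+1).choose k : ℤ)) * ((r:ℤ)+j) *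
                ((rstirling2 r n j : ℤ) * (risingFactorial r j : ℤ)) + g (j+1) := by
        intro j _
        simp only [hgdef, rstirling2, rf_succ]
        push_cast
        ring
      have hS := Finset.sum_congr rfl hfs
      rw [Finset.sum_add_distrib] at hS
      have hg1 : ∑ j ∈ range (n+1), g (j+1) = (∑ j ∈ range (n+1), g j) - g 0 := by
        have h1 := Finset.sum_range_succ' g (n+1)
        have h2 := Finset.sum_range_succ g (n+1)
        have h3 : g (n+1) = 0 := by
          simp [hgdef, rstirling2_eq_zero r n (n+1) (Nat.lt_succ_self n)]
        rw [h3] at h2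
        linarith [h1, h2]
      have hf0 : (-1:ℤ)^(n+1+0) * ((Nat.choose 0 k : ℤ)) * (rstirling2 r (n+1) 0 : ℤ) *
          (risingFactorial r 0 : ℤ) = g 0 := by
        simp only [hgdef, rstirling2, risingFactorial]
        push_cast
        ring
      have hmain : (∑ j ∈ range (n+1),
            (-1:ℤ)^(n+j) * (((j+1).choose k : ℤ)) * ((r:ℤ)+j) *
              ((rstirling2 r n j : ℤ) * (risingFactorial r j : ℤ)))
          + ∑ j ∈ range (n+1), g j
        = ∑ j ∈ range (n+1),
            (-1:ℤ)^(n+j) * ((r:ℤ)+j) * (((j+1).choose k : ℤ) - (j.choose k : ℤ)) *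
              ((rstirling2 r n j : ℤ) * (risingFactorial r j : ℤ)) := by
        rw [← Finset.sum_add_distrib]
        apply Finset.sum_congr rfl
        intro j _
        simp only [hgdef]
        ring
      linarith [hS, hg1, hf0, hmain]
    intro k
    match k with
    | 0 =>
      rw [show n + 1 + 1 = n + 2 from rfl, step1 0]
      simp [stirling2]
    | k+1 =>
      rw [show n + 1 + 1 = n + 2 from rfl, step1 (k+1)]
      have hpt : ∀ j ∈ range (n+1),
          (-1:ℤ)^(n+j) * ((r:ℤ)+j) * (((j+1).choose (k+1) : ℤ) - (j.choose (k+1) : ℤ)) *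
              ((rstirling2 r n j : ℤ) * (risingFactorial r j : ℤ))
            = ((r:ℤ)+k) * ((-1:ℤ)^(n+j) * (j.choose k : ℤ) * (rstirling2 r n j : ℤ) *
                  (risingFactorial r j : ℤ))
              + ((k:ℤ)+1) * ((-1:ℤ)^(n+j) * (j.choose (k+1) : ℤ) * (rstirling2 r n j : ℤ) *
                  (risingFactorial r j : ℤ)) := by
        intro j _
        have h := choose_id r j k
        rw [Nat.choose_succ_succ]
        push_cast
        linear_combination ((-1:ℤ)^(n+j) * ((rstirling2 r n j : ℤ) * (risingFactorial r j : ℤ))) * h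
      rw [Finset.sum_congr rfl hpt, Finset.sum_add_distrib, ← Finset.mul_sum, ← Finset.mul_sum,
        ← ih k, ← ih (k+1)]
      simp only [stirling2, rf_succ]
      push_cast
      ring

theorem stmt_9 (n r : ℕ) (hr : 1 ≤ r) (y : ℤ) :
    geomPoly r n y =
      ∑ k ∈ Finset.range (n+1),
        (rstirling2 r n k : ℤ) * (risingFactorial r k : ℤ) * (-1)^(n+k) * (y+1)^k := by
  unfold geomPoly
  have h1 : ∀ k ∈ range (n+1), ((stirling2 n k * risingFactorial r k : ℕ) : ℤ) * y ^ k =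
      ∑ j ∈ range (n+1),
        (-1:ℤ)^(n+j) * (j.choose k : ℤ) * (rstirling2 r n j : ℤ) * (risingFactorial r j : ℤ) * y^k := by
    intro k _
    rw [← Finset.sum_mul, ← key r n k]
    push_cast
    ring
  rw [Finset.sum_congr rfl h1, Finset.sum_comm]
  apply Finset.sum_congr rfl
  intro j hj
  have hjn : j ≤ n := Nat.lt_succ_iff.mp (Finset.mem_range.mp hj)
  have hsub : ∑ k ∈ range (n+1), (j.choose k : ℤ) * y^k
      = ∑ k ∈ range (j+1), (j.choose k : ℤ) * y^k := by
    refine (Finset.sum_subset (Finset.range_subset_range.mpr (by omega)) ?_).symm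
    intro x _ hx
    have : j < x := by simpa using hx
    simp [Nat.choose_eq_zero_of_lt this]
  have hbin : ∑ k ∈ range (n+1), (j.choose k : ℤ) * y^k = (y+1)^j := by
    rw [hsub, add_pow]
    apply Finset.sum_congr rfl
    intro k _
    rw [one_pow]
    ring
  have hmul : ∑ k ∈ range (n+1),
      (-1:ℤ)^(n+j) * (j.choose k : ℤ) * (rstirling2 r n j : ℤ) * (risingFactorial r j : ℤ) * y^k
    = ((-1:ℤ)^(n+j) * (rstirling2 r n j : ℤ) * (risingFactorial r j : ℤ)) *
        ∑ k ∈ range (n+1), (j.choose k : ℤ) * y^k := by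
    rw [Finset.mul_sum]
    apply Finset.sum_congr rfl
    intro k _
    ring
  rw [hmul, hbin]
  ring
end
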